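/- arXiv:2307.01781 — 2 statements merged into one kernel-verified Lean document; each statement's English description precedes it below -/
import Mathlib

section
/- Let k be a nonnegative integer, let x be a vertex, and let P be a simple path in G from x to t, all of whose vertices other than x satisfy d(v) > d(x), whose length ℓ satisfies ℓ ≤ d(t) − d(x) + k. Let m denote the number of stable edges of P (note m ≤ k follows from the length bound), and suppose d(x) + ⌊(k−m)/2⌋ + 1 ≤ d(t). Then P contains a vertex y such that: (1) d(x) + 1 ≤ d(y) ≤ d(x) + ⌊(k−m)/2⌋ + 1; (2) every vertex u ≠ y on the subpath P[y,t] satisfies d(u) > d(y); and (3) every vertex v on the subpath P[x,y] satisfies d(v) ≤ d(y). -/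
/-!
Along a walk on which `d` changes by at most one per step, the length equals the total rise plus
twice the number of backward steps plus the number of stable steps. The length bound therefore
leaves at most `(k - m) / 2` backward steps, which land on at most that many levels, so some level
`c` with `d x < c ≤ d x + (k - m) / 2 + 1` is never entered by a backward step. Once `P` climbs
above `c` it stays above `c`, and `y` is the vertex from which `P` first climbs above `c`.
-/

theorem SimpleGraph.Adj.dist_le_dist_add_one {V : Type*} {G : SimpleGraph V} {a b : V}
    (h : G.Adj a b) (s : V) : G.dist s b ≤ G.dist s a + 1 := by
  rcases h.diff_dist_adj (u := s) with h | h | h <;> omega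

namespace SimpleGraph.Walk

variable {V : Type*} {G : SimpleGraph V} {u v : V}

def backwardDarts (d : V → ℕ) (p : G.Walk u v) : List G.Dart :=
  p.darts.filter fun e => d e.fst = d e.snd + 1

def stableDarts (d : V → ℕ) (p : G.Walk u v) : List G.Dart :=
  p.darts.filter fun e => d e.fst = d e.snd

theorem forall_mem_support_of_darts {P : V → Prop} (p : G.Walk u v) (hu : P u)
    (hp : ∀ e ∈ p.darts, P e.fst → P e.snd) : ∀ w ∈ p.support, P w := by
  induction p with
  | nil => simpa using hu
  | cons h q ih =>
    have hq : ∀ e ∈ q.darts, P e.fst → P e.snd := fun e he => hp e (by simp [he])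
    simpa [hu] using ih (hp ⟨(_, _), h⟩ (by simp) hu) hq

theorem length_eq_rise_add_two_mul_backward_add_stable {d : V → ℕ}
    (hd : ∀ ⦃a b⦄, G.Adj a b → d b ≤ d a + 1) (p : G.Walk u v) :
    (p.length : ℤ) = d v - d u + 2 * (p.backwardDarts d).length + (p.stableDarts d).length := by
  induction p with
  | nil => simp [backwardDarts, stableDarts]
  | @cons a b c h q ih =>
    have hab := hd h
    have hba := hd h.symm
    simp only [backwardDarts, stableDarts, darts_cons, List.filter_cons, decide_eq_true_eq,
      length_cons] at ih ⊢
    split_ifs <;> simp only [List.length_cons, Nat.cast_add, Nat.cast_one] <;> omega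

theorem exists_level_not_crossed_downward {d : V → ℕ}
    (hd : ∀ ⦃a b⦄, G.Adj a b → d b ≤ d a + 1) (p : G.Walk u v) (a : ℕ) :
    ∃ c, a < c ∧ c ≤ a + (p.backwardDarts d).length + 1 ∧
      ∀ e ∈ p.darts, c < d e.fst → c < d e.snd := by
  set levels := (p.backwardDarts d).map fun e => d e.snd
  have hcard : levels.toFinset.card <
      (Finset.Icc (a + 1) (a + (p.backwardDarts d).length + 1)).card := by
    calc levels.toFinset.card ≤ levels.length := List.toFinset_card_le _
      _ < _ := by rw [List.length_map, Nat.card_Icc]; omega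
  obtain ⟨c, hc, hcl⟩ := Finset.exists_mem_notMem_of_card_lt_card hcard
  rw [Finset.mem_Icc] at hc
  refine ⟨c, by omega, hc.2, fun e he hlt => ?_⟩
  by_contra hle
  have := hd e.adj.symm
  exact hcl (List.mem_toFinset.2 (List.mem_map.2
    ⟨e, List.mem_filter.2 ⟨he, by simp only [decide_eq_true_eq]; omega⟩, by omega⟩))

variable [DecidableEq V]

theorem dropUntil_cons {w x : V} (h : G.Adj u x) (q : G.Walk x v) (hw : w ∈ q.support)
    (huw : u ≠ w) : (q.cons h).dropUntil w (List.mem_of_mem_tail hw) = q.dropUntil w hw := by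
  simp [dropUntil, huw]

theorem IsPath.exists_split_at_level {d : V → ℕ} (hd : ∀ ⦃a b⦄, G.Adj a b → d b ≤ d a + 1)
    {c : ℕ} {p : G.Walk u v} (hp : p.IsPath) (hc : ∀ e ∈ p.darts, c < d e.fst → c < d e.snd)
    (hu : d u ≤ c) (hv : c ≤ d v) :
    ∃ (y : V) (hy : y ∈ p.support), d y = c ∧
      (∀ w ∈ (p.dropUntil y hy).support, w ≠ y → c < d w) ∧
      (∀ w ∈ (p.takeUntil y hy).support, d w ≤ c) := by
  induction p with
  | @nil w =>
    exact ⟨w, start_mem_support _, le_antisymm hu hv, by simp, by simpa using hu⟩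
  | @cons a b t h q ih =>
    have hq : ∀ e ∈ q.darts, c < d e.fst → c < d e.snd := fun e he => hc e (by simp [he])
    by_cases hb : d b ≤ c
    · obtain ⟨y, hy, hyc, hdrop, htake⟩ := ih hp.of_cons hq hb hv
      have hay : a ≠ y := fun hay => (cons_isPath_iff h q).1 hp |>.2 (hay ▸ hy)
      refine ⟨y, List.mem_of_mem_tail hy, hyc, ?_, ?_⟩
      · rwa [dropUntil_cons h q hy hay]
      · simpa [takeUntil_cons hy hay h, hu] using htake
    · -- the path crosses level `c` upwards on its first step, and never comes back
      have hbc : c < d b := not_le.1 hb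
      refine ⟨a, start_mem_support _, by have := hd h; omega, ?_, by simpa using hu⟩
      have hqc := forall_mem_support_of_darts (P := fun w => c < d w) q hbc hq
      simpa using fun w hw _ => hqc w hw

end SimpleGraph.Walk

theorem detour_path_split_general {V : Type*} [DecidableEq V] (G : SimpleGraph V)
    (s t : V) (k : ℕ) (x : V)
    (P : G.Walk x t) (hP : P.IsPath)
    (hlen : (P.length : ℤ) ≤ (G.dist s t : ℤ) - (G.dist s x : ℤ) + k)
    (m : ℕ)
    (hm : m = (P.darts.filter
      (fun e => G.dist s e.fst = G.dist s e.snd)).length)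
    (hfar : G.dist s x + (k - m) / 2 + 1 ≤ G.dist s t) :
    ∃ (y : V) (hy : y ∈ P.support),
      (G.dist s x + 1 ≤ G.dist s y ∧
        G.dist s y ≤ G.dist s x + (k - m) / 2 + 1) ∧
      (∀ u ∈ (P.dropUntil y hy).support, u ≠ y → G.dist s y < G.dist s u) ∧
      (∀ v ∈ (P.takeUntil y hy).support, G.dist s v ≤ G.dist s y) := by
  have hd : ∀ ⦃a b⦄, G.Adj a b → G.dist s b ≤ G.dist s a + 1 := fun _ _ h =>
    h.dist_le_dist_add_one s
  have hm : m = (P.stableDarts (G.dist s)).length := hm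
  have hcount := P.length_eq_rise_add_two_mul_backward_add_stable hd
  obtain ⟨c, hxc, hcB, hc⟩ := P.exists_level_not_crossed_downward hd (G.dist s x)
  obtain ⟨y, hy, rfl, hdrop, htake⟩ := hP.exists_split_at_level hd hc hxc.le (by omega)
  exact ⟨y, hy, ⟨hxc, by omega⟩, hdrop, htake⟩

/-- splitting a path of bounded excess length at a vertex `y`
close to `x`, such that `P[y,t]` stays strictly farther from `s` than `y`,
and `P[x,y]` stays at distance at most `d(y)`. Here `d u = G.dist s u`,
and `m` is the number of stable edges of `P`. -/
theorem detour_path_split {V : Type*} [DecidableEq V] (G : SimpleGraph V)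
    (hconn : G.Connected) (s t : V) (k : ℕ) (x : V)
    (P : G.Walk x t) (hP : P.IsPath)
    (hup : ∀ v ∈ P.support, v ≠ x → G.dist s x < G.dist s v)
    (hlen : (P.length : ℤ) ≤ (G.dist s t : ℤ) - (G.dist s x : ℤ) + k)
    (m : ℕ)
    (hm : m = (P.darts.filter
      (fun e => G.dist s e.fst = G.dist s e.snd)).length)
    (hfar : G.dist s x + (k - m) / 2 + 1 ≤ G.dist s t) :
    ∃ (y : V) (hy : y ∈ P.support),
      (G.dist s x + 1 ≤ G.dist s y ∧
        G.dist s y ≤ G.dist s x + (k - m) / 2 + 1) ∧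
      (∀ u ∈ (P.dropUntil y hy).support, u ≠ y → G.dist s y < G.dist s u) ∧
      (∀ v ∈ (P.takeUntil y hy).support, G.dist s v ≤ G.dist s y) :=
  detour_path_split_general G s t k x P hP hlen m hm hfar
end

section
/- Let k be a nonnegative integer, let x be a vertex, and let P be a simple path in G from x to t, all of whose vertices other than x satisfy d(v) > d(x), whose length ℓ satisfies ℓ ≤ d(t) − d(x) + k. Let m denote the number of stable edges of P, and suppose d(x) + ⌊(k−m)/2⌋ + 1 ≤ d(t). Then there exists a vertex y on P with d(x) < d(y) ≤ d(x) + ⌊(k−m)/2⌋ + 1 such that, writing A = P[x,y] and B = P[y,t] with lengths a and b respectively: every vertex of A lies in {x} ∪ {w : d(x) < d(w) ≤ d(y)}; every vertex of B lies in {y} ∪ {w : d(w) > d(y)}; a + b = ℓ; a ≤ d(y) − d(x) + k ≤ ⌊(3k−m)/2⌋ + 1; and b ≤ d(t) − d(y) + k. -/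
/-!
Along an edge `d = dist s` changes by at most one, so every walk `Q` from `u` to `v` has
`|Q| = d v - d u + (#stable darts of Q) + 2 * (#descending darts of Q)`; for `P` the length
bound therefore leaves at most `(k - m) / 2` descents. If `P` never descends onto a level
`c` with `d x < c ≤ d t`, the last vertex `y` of `P` with `d y ≤ c` lies on level `c`,
everything before it is at most `c` and everything after it is above `c`. Distinct levels
need distinct descents, so one of the `(k - m) / 2 + 1` levels just above `d x` is never
descended onto; cutting there, both length bounds are the identity applied to `P[x,y]` and
`P[y,t]`, whose stable darts and descents add up to those of `P`.
-/

open SimpleGraph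

namespace SimpleGraph

theorem Adj.dist_le_dist_add_one_s2 {V : Type*} {G : SimpleGraph V} {a b : V} (h : G.Adj a b)
    (s : V) : G.dist s b ≤ G.dist s a + 1 := by
  rcases h.diff_dist_adj (u := s) with h | h | h <;> omega

namespace Walk

variable {V : Type*} {G : SimpleGraph V} (f : V → ℕ)

def numFlat {u v : V} (p : G.Walk u v) : ℕ :=
  (p.darts.filter fun e => f e.fst = f e.snd).length

def numDescents {u v : V} (p : G.Walk u v) : ℕ :=
  (p.darts.filter fun e => f e.snd < f e.fst).length

theorem numFlat_append {u v w : V} (p : G.Walk u v) (q : G.Walk v w) :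
    (p.append q).numFlat f = p.numFlat f + q.numFlat f := by
  simp [numFlat]

theorem numDescents_append {u v w : V} (p : G.Walk u v) (q : G.Walk v w) :
    (p.append q).numDescents f = p.numDescents f + q.numDescents f := by
  simp [numDescents]

variable {f}

theorem length_eq_numFlat_add_two_mul_numDescents (hf : ∀ ⦃a b⦄, G.Adj a b → f b ≤ f a + 1)
    {u v : V} (p : G.Walk u v) :
    (p.length : ℤ) = f v - f u + p.numFlat f + 2 * p.numDescents f := by
  induction p with
  | nil => simp [numFlat, numDescents]
  | @cons a b _ h q ih =>
    have hab := hf h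
    have hba := hf h.symm
    simp only [numFlat, numDescents, darts_cons, List.filter_cons, length_cons] at ih ⊢
    rcases lt_trichotomy (f a) (f b) with hlt | heq | hgt
    · simp only [hlt.ne, not_lt.2 hlt.le, decide_false]
      push_cast; omega
    · simp only [heq, lt_irrefl, decide_true, decide_false, if_true, List.length_cons]
      push_cast; omega
    · simp only [hgt, hgt.ne', decide_true, decide_false, if_true, List.length_cons]
      push_cast; omega

theorem card_le_numDescents {u v : V} (p : G.Walk u v) (s : Finset ℕ)
    (hs : ∀ c ∈ s, ∃ e ∈ p.darts, f e.snd < f e.fst ∧ f e.snd = c) :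
    s.card ≤ p.numDescents f := by
  classical
  calc s.card
      ≤ ((p.darts.filter fun e => f e.snd < f e.fst).toFinset.image fun e => f e.snd).card := by
        refine Finset.card_le_card fun c hc => ?_
        obtain ⟨e, he, hdesc, rfl⟩ := hs c hc
        exact Finset.mem_image_of_mem _ (by simp [he, hdesc])
    _ ≤ (p.darts.filter fun e => f e.snd < f e.fst).toFinset.card := Finset.card_image_le
    _ ≤ p.numDescents f := List.toFinset_card_le _

theorem IsPath.exists_descent_or_above_or_cut [DecidableEq V]
    (hf : ∀ ⦃a b⦄, G.Adj a b → f b ≤ f a + 1) {u v : V} {p : G.Walk u v} (hp : p.IsPath)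
    {c : ℕ} (hc : c ≤ f v) :
    (∃ e ∈ p.darts, f e.snd < f e.fst ∧ f e.snd = c) ∨ (∀ w ∈ p.support, c < f w) ∨
      ∃ y, ∃ hy : y ∈ p.support, f y = c ∧ (∀ w ∈ (p.takeUntil y hy).support, f w ≤ c) ∧
        ∀ w ∈ (p.dropUntil y hy).support, w = y ∨ c < f w := by
  induction p with
  | nil =>
    rcases hc.eq_or_lt with hcv | hcv
    · exact Or.inr <| Or.inr ⟨_, start_mem_support _, hcv.symm, by simp [hcv], by simp⟩
    · exact Or.inr <| Or.inl <| by simpa using hcv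
  | @cons a b _ h q ih =>
    rw [cons_isPath_iff] at hp
    rcases ih hp.1 hc with ⟨e, he, hdesc⟩ | habove | ⟨y, hy, hfy, htake, hdrop⟩
    · exact Or.inl ⟨e, by simp [he], hdesc⟩
    · by_cases hac : c < f a
      · exact Or.inr <| Or.inl <| by simpa [hac] using habove
      · have hab := hf h
        have hb := habove b (start_mem_support _)
        refine Or.inr <| Or.inr ⟨a, start_mem_support _, by omega, by simpa using hac, ?_⟩
        simpa using fun w hw => Or.inr (habove w hw)
    · have hay : a ≠ y := fun hay => hp.2 (hay ▸ hy)
      by_cases hac : f a ≤ c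
      · refine Or.inr <| Or.inr ⟨y, List.mem_cons_of_mem _ hy, hfy, ?_, ?_⟩
        · rw [takeUntil_cons hy hay]
          simpa [hac] using htake
        · simpa [dropUntil, hay] using hdrop
      · -- the first step of `p` drops from above `c` to level `c`
        have hb := htake b (start_mem_support _)
        have hba := hf h.symm
        exact Or.inl ⟨⟨(a, b), h⟩, by simp, show f b < f a by omega, show f b = c by omega⟩

end Walk

end SimpleGraph

theorem detour_path_split_full_general {V : Type*} [DecidableEq V] (G : SimpleGraph V)
    (s t : V) (k : ℕ) (x : V)
    (P : G.Walk x t) (hP : P.IsPath)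
    (hup : ∀ v ∈ P.support, v ≠ x → G.dist s x < G.dist s v)
    (hlen : (P.length : ℤ) ≤ (G.dist s t : ℤ) - (G.dist s x : ℤ) + k)
    (m : ℕ)
    (hm : m = (P.darts.filter
      (fun e => G.dist s e.fst = G.dist s e.snd)).length)
    (hfar : G.dist s x + (k - m) / 2 + 1 ≤ G.dist s t) :
    ∃ (y : V) (hy : y ∈ P.support),
      (G.dist s x < G.dist s y ∧
        G.dist s y ≤ G.dist s x + (k - m) / 2 + 1) ∧
      (∀ w ∈ (P.takeUntil y hy).support,
        w = x ∨ (G.dist s x < G.dist s w ∧ G.dist s w ≤ G.dist s y)) ∧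
      (∀ w ∈ (P.dropUntil y hy).support,
        w = y ∨ G.dist s y < G.dist s w) ∧
      (P.takeUntil y hy).length + (P.dropUntil y hy).length = P.length ∧
      (P.takeUntil y hy).length ≤ G.dist s y - G.dist s x + k ∧
      G.dist s y - G.dist s x + k ≤ (3 * k - m) / 2 + 1 ∧
      (P.dropUntil y hy).length ≤ G.dist s t - G.dist s y + k := by
  have hf : ∀ ⦃a b⦄, G.Adj a b → G.dist s b ≤ G.dist s a + 1 := fun _ _ h =>
    h.dist_le_dist_add_one_s2 s
  have hm_flat : m = P.numFlat (G.dist s) := hm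
  have hbudget : m + 2 * P.numDescents (G.dist s) ≤ k := by
    have := P.length_eq_numFlat_add_two_mul_numDescents hf
    omega
  obtain ⟨c, hc, hno⟩ : ∃ c ∈ Finset.Icc (G.dist s x + 1) (G.dist s x + (k - m) / 2 + 1),
      ¬ ∃ e ∈ P.darts, G.dist s e.snd < G.dist s e.fst ∧ G.dist s e.snd = c := by
    by_contra! hall
    have := P.card_le_numDescents _ hall
    simp only [Nat.card_Icc] at this
    omega
  rw [Finset.mem_Icc] at hc
  obtain hdesc | habove | ⟨y, hy, rfl, htake, hdrop⟩ :=
    hP.exists_descent_or_above_or_cut hf (c := c) (by omega)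
  · exact absurd hdesc hno
  · exact absurd (habove x P.start_mem_support) (by omega)
  have hsplit := P.take_spec hy
  have hA := (P.takeUntil y hy).length_eq_numFlat_add_two_mul_numDescents hf
  have hB := (P.dropUntil y hy).length_eq_numFlat_add_two_mul_numDescents hf
  have hflat := Walk.numFlat_append (G.dist s) (P.takeUntil y hy) (P.dropUntil y hy)
  have hdescents := Walk.numDescents_append (G.dist s) (P.takeUntil y hy) (P.dropUntil y hy)
  rw [hsplit] at hflat hdescents
  refine ⟨y, hy, ⟨by omega, by omega⟩, fun w hw => ?_, hdrop,
    by rw [← Walk.length_append, hsplit], by omega, by omega, by omega⟩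
  by_cases hwx : w = x
  · exact Or.inl hwx
  · exact Or.inr ⟨hup w (P.support_takeUntil_subset_support hy hw) hwx, htake w hw⟩

/-- splitting a candidate detour path `P` from `x` to `t` at a
vertex `y` with `d(x) < d(y) ≤ d(x) + ⌊(k-m)/2⌋ + 1`, where
`A = P[x,y]`, `B = P[y,t]` satisfy the stated containment and length bounds.
Here `d u = G.dist s u` and `m` is the number of stable edges of `P`. -/
theorem detour_path_split_full {V : Type*} [DecidableEq V] (G : SimpleGraph V)
    (hconn : G.Connected) (s t : V) (k : ℕ) (x : V)
    (P : G.Walk x t) (hP : P.IsPath)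
    (hup : ∀ v ∈ P.support, v ≠ x → G.dist s x < G.dist s v)
    (hlen : (P.length : ℤ) ≤ (G.dist s t : ℤ) - (G.dist s x : ℤ) + k)
    (m : ℕ)
    (hm : m = (P.darts.filter
      (fun e => G.dist s e.fst = G.dist s e.snd)).length)
    (hfar : G.dist s x + (k - m) / 2 + 1 ≤ G.dist s t) :
    ∃ (y : V) (hy : y ∈ P.support),
      (G.dist s x < G.dist s y ∧
        G.dist s y ≤ G.dist s x + (k - m) / 2 + 1) ∧
      (∀ w ∈ (P.takeUntil y hy).support,
        w = x ∨ (G.dist s x < G.dist s w ∧ G.dist s w ≤ G.dist s y)) ∧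
      (∀ w ∈ (P.dropUntil y hy).support,
        w = y ∨ G.dist s y < G.dist s w) ∧
      (P.takeUntil y hy).length + (P.dropUntil y hy).length = P.length ∧
      (P.takeUntil y hy).length ≤ G.dist s y - G.dist s x + k ∧
      G.dist s y - G.dist s x + k ≤ (3 * k - m) / 2 + 1 ∧
      (P.dropUntil y hy).length ≤ G.dist s t - G.dist s y + k :=
  detour_path_split_full_general G s t k x P hP hup hlen m hm hfar
end
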